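/- arXiv:1907.04038 — 5 statements merged into one kernel-verified Lean document; each statement's English description precedes it below -/
import Mathlib

section
/- For integers 0 ≤ j ≤ l and a real number λ > 0, the identity ∑_{i=j}^{l} ( (j+1)_{i-j} · C(l,i) ) / ( (λ+2j)_{2i-2j} · (λ+2i+1)_{l-i} ) = C(l,j) / (λ+2j)_{l-j} holds, where (x)_p denotes the Pochhammer symbol. -/
open Finset

/-- Pochhammer (rising factorial) symbol `(x)_p = x (x+1) ⋯ (x+p-1)`. -/
noncomputable def poch (x : ℝ) (p : ℕ) : ℝ := ∏ i ∈ Finset.range p, (x + i)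

open scoped Nat

/-!
Substituting `i = j + k`, `l = j + n` and `x = λ + 2j`, the numerator factors as
`(j+1)_k · C(j+n, j+k) = C(j+n, j) · n!/(n-k)!`, and the identity becomes the `j`-free identity
`∑_{k ≤ n} (n!/(n-k)!) / ((x)_{2k} (x+2k+1)_{n-k}) = 1/(x)_n`.
Splitting off `k = 0`, the remaining terms are `n/(x(x+1))` times the same sum for `(x+2, n-1)`,
so induction on `n` reduces it to `1/(x+1)_n + n/(x (x+1)_n) = (x+n)/(x (x+1)_n) = 1/(x)_n`.
-/

lemma poch_zero (x : ℝ) : poch x 0 = 1 := prod_range_zero _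

lemma poch_succ_right (x : ℝ) (p : ℕ) : poch x (p + 1) = poch x p * (x + p) :=
  prod_range_succ _ _

lemma poch_succ_left (x : ℝ) (p : ℕ) : poch x (p + 1) = x * poch (x + 1) p := by
  simp only [poch, prod_range_succ', Nat.cast_add, Nat.cast_one, Nat.cast_zero, add_zero]
  rw [mul_comm]
  congr 1
  exact prod_congr rfl fun i _ => by ring

lemma poch_pos {x : ℝ} (hx : 0 < x) (p : ℕ) : 0 < poch x p :=
  prod_pos fun _ _ => by positivity

lemma poch_natCast_add_one (j k : ℕ) : poch ((j : ℝ) + 1) k = ((j + 1).ascFactorial k : ℝ) := by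
  simp [poch, Nat.ascFactorial_eq_prod_range]

lemma ascFactorial_mul_choose {j n k : ℕ} (hk : k ≤ n) :
    (j + 1).ascFactorial k * (j + n).choose (j + k) = (j + n).choose j * n.descFactorial k := by
  have hpos : 0 < j ! * (n - k)! := by positivity
  refine Nat.eq_of_mul_eq_mul_right hpos ?_
  calc (j + 1).ascFactorial k * (j + n).choose (j + k) * (j ! * (n - k)!)
      = (j + n).choose (j + k) * (j + k)! * (j + n - (j + k))! := by
        rw [← Nat.factorial_mul_ascFactorial, Nat.add_sub_add_left]; ring
    _ = (j + n).choose j * j ! * (j + n - j)! := by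
        rw [Nat.choose_mul_factorial_mul_factorial (by omega),
          Nat.choose_mul_factorial_mul_factorial (by omega)]
    _ = (j + n).choose j * n.descFactorial k * (j ! * (n - k)!) := by
        rw [Nat.add_sub_cancel_left, ← Nat.factorial_mul_descFactorial hk]; ring

lemma sum_descFactorial_div_poch {x : ℝ} (hx : 0 < x) (n : ℕ) :
    ∑ k ∈ range (n + 1), (n.descFactorial k : ℝ) / (poch x (2 * k) * poch (x + 2 * k + 1) (n - k))
      = 1 / poch x n := by
  induction n generalizing x with
  | zero => simp [poch_zero]
  | succ n ih =>
    have hshift : ∀ k ∈ range (n + 1),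
        ((n + 1).descFactorial (k + 1) : ℝ) /
            (poch x (2 * (k + 1)) * poch (x + 2 * (k + 1 : ℕ) + 1) (n + 1 - (k + 1))) =
          (n + 1) / (x * (x + 1)) *
            ((n.descFactorial k : ℝ) /
              (poch (x + 2) (2 * k) * poch (x + 2 + 2 * k + 1) (n - k))) := by
      intro k _
      rw [Nat.succ_descFactorial_succ, show 2 * (k + 1) = 2 * k + 1 + 1 by ring, poch_succ_left,
        poch_succ_left (x + 1), Nat.add_sub_add_right, div_mul_div_comm, mul_assoc x,
        show x + 1 + 1 = x + 2 by ring, show x + 2 * ((k + 1 : ℕ) : ℝ) + 1 = x + 2 + 2 * k + 1 by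
          push_cast; ring]
      push_cast
      ring
    rw [sum_range_succ', sum_congr rfl hshift, ← mul_sum, ih (by positivity)]
    simp only [Nat.descFactorial_zero, Nat.cast_one, mul_zero, Nat.cast_zero, add_zero,
      poch_zero, one_mul, Nat.sub_zero]
    have hP := poch_pos (show 0 < x + 1 by positivity) n
    have hR := poch_pos (show 0 < x + 2 by positivity) n
    have hrec : poch (x + 1) n * (x + 1 + n) = (x + 1) * poch (x + 2) n := by
      rw [← poch_succ_right, poch_succ_left, add_assoc, one_add_one_eq_two]
    rw [poch_succ_left x, poch_succ_left (x + 1), add_assoc x 1 1, one_add_one_eq_two]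
    field_simp
    linear_combination hrec

theorem stmt1 (lam : ℝ) (hlam : 0 < lam) (j l : ℕ) (hjl : j ≤ l) :
    ∑ i ∈ Finset.Icc j l,
        (poch ((j : ℝ) + 1) (i - j) * (l.choose i : ℝ)) /
          (poch (lam + 2 * j) (2 * i - 2 * j) * poch (lam + 2 * i + 1) (l - i)) =
      (l.choose j : ℝ) / poch (lam + 2 * j) (l - j) := by
  obtain ⟨n, rfl⟩ := Nat.exists_eq_add_of_le hjl
  have hterm : ∀ k ∈ range (n + 1),
      poch ((j : ℝ) + 1) (j + k - j) * ((j + n).choose (j + k) : ℝ) /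
          (poch (lam + 2 * j) (2 * (j + k) - 2 * j) *
            poch (lam + 2 * (j + k : ℕ) + 1) (j + n - (j + k))) =
        ((j + n).choose j : ℝ) * ((n.descFactorial k : ℝ) /
          (poch (lam + 2 * j) (2 * k) * poch (lam + 2 * j + 2 * k + 1) (n - k))) := by
    intro k hk
    have hkn : k ≤ n := mem_range_succ_iff.mp hk
    rw [Nat.add_sub_cancel_left, ← Nat.mul_sub, Nat.add_sub_cancel_left, Nat.add_sub_add_left,
      poch_natCast_add_one, mul_div_assoc', ← Nat.cast_mul, ← Nat.cast_mul,
      ascFactorial_mul_choose hkn,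
      show lam + 2 * ((j + k : ℕ) : ℝ) + 1 = lam + 2 * j + 2 * k + 1 by push_cast; ring,
      Nat.cast_mul, mul_div_assoc]
  rw [← Ico_add_one_right_eq_Icc, sum_Ico_eq_sum_range, show j + n + 1 - j = n + 1 by omega,
    sum_congr rfl hterm, ← mul_sum, sum_descFactorial_div_poch (by positivity),
    Nat.add_sub_cancel_left, mul_one_div]
end

section
/- Let T be a contraction on a Hilbert space H and φ(z) = β(z−α)/(1−ᾱz) a Möbius map (|α|<1, |β|=1). With c(φ,T) = s(β)√(1−|α|²)(I−ᾱT)^{-1}, one has I − φ(T)φ(T)* = c(φ,T)(I − TT*)c(φ,T)*, where φ(T) = β(T−αI)(I−ᾱT)^{-1}. -/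
open ContinuousLinearMap

variable {H : Type*} [NormedAddCommGroup H] [InnerProductSpace ℂ H] [CompleteSpace H]

/-- `φ(T) = β (T − αI)(I − ᾱT)⁻¹` for a Möbius map `φ(z) = β(z−α)/(1−ᾱz)`. -/
noncomputable def phiT (T : H →L[ℂ] H) (α β : ℂ) : H →L[ℂ] H :=
  β • ((T - α • (1 : H →L[ℂ] H)) * Ring.inverse (1 - ((starRingEnd ℂ) α) • T))

/-- `c(φ,T) = s(β) √(1−|α|²) (I − ᾱT)⁻¹`, a square root of `φ'` evaluated at `T`. -/
noncomputable def cT (T : H →L[ℂ] H) (α s : ℂ) : H →L[ℂ] H :=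
  (s * ((Real.sqrt (1 - ‖α‖ ^ 2) : ℝ) : ℂ)) •
    Ring.inverse (1 - ((starRingEnd ℂ) α) • T)

/-!
Write `A = I − ᾱT`, which is invertible and commutes with `T − αI`, so that `A φ(T) = β(T − αI)`
and `A c(φ,T) = s√(1−|α|²) I`. Since `A` is invertible it suffices to prove the identity after
conjugating by `A`, i.e. `A A* − (T − αI)(T − αI)* = (1 − |α|²)(I − TT*)` (using `|β| = |s| = 1`),
which is the operator version of `|1 − ᾱz|² − |z − α|² = (1 − |α|²)(1 − |z|²)`.
-/

open ComplexConjugate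

theorem IsUnit.eq_of_mul_mul_star_eq {M : Type*} [Monoid M] [StarMul M] {a x y : M}
    (ha : IsUnit a) (h : a * x * star a = a * y * star a) : x = y :=
  ha.mul_left_cancel (ha.star.mul_right_cancel h)

theorem mul_mul_ring_inverse_of_commute {M : Type*} [MonoidWithZero M] {a b : M}
    (hab : Commute a b) (ha : IsUnit a) : a * (b * Ring.inverse a) = b := by
  rw [← mul_assoc, hab.eq, mul_assoc, Ring.mul_inverse_cancel a ha, mul_one]

theorem isUnit_one_sub_smul_of_norm_lt_one {A : Type*} [NormedRing A] [CompleteSpace A]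
    [NormedAlgebra ℂ A] {t : A} {a : ℂ} (ht : ‖t‖ ≤ 1) (ha : ‖a‖ < 1) : IsUnit (1 - a • t) :=
  isUnit_one_sub_of_norm_lt_one <| by
    rw [norm_smul]
    exact mul_lt_one_of_nonneg_of_lt_one_left (norm_nonneg a) ha ht

theorem commute_one_sub_smul_sub_smul_one {R : Type*} [Ring R] [Algebra ℂ R] (t : R) (a b : ℂ) :
    Commute (1 - a • t) (t - b • 1) := by
  simp only [Commute, SemiconjBy, sub_mul, mul_sub, one_mul, mul_one, smul_mul_assoc,
    mul_smul_comm]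
  module

theorem mobius_defect_identity {R : Type*} [Ring R] [StarRing R] [Algebra ℂ R] [StarModule ℂ R]
    (t : R) (α : ℂ) :
    (1 - conj α • t) * star (1 - conj α • t) - (t - α • 1) * star (t - α • 1) =
      ((1 - ‖α‖ ^ 2 : ℝ) : ℂ) • (1 - t * star t) := by
  have hα : conj α * α = ((‖α‖ ^ 2 : ℝ) : ℂ) := by
    rw [mul_comm, Complex.mul_conj', Complex.ofReal_pow]
  simp only [star_sub, star_smul, star_one, Complex.star_def, Complex.conj_conj,
    mul_sub, sub_mul, smul_mul_assoc, mul_smul_comm, smul_sub, smul_smul, one_mul, mul_one]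
  rw [mul_comm α, hα, Complex.ofReal_sub, Complex.ofReal_one]
  module

theorem mul_conj_mul_sqrt {s : ℂ} (hs : ‖s‖ = 1) {r : ℝ} (hr : 0 ≤ r) :
    s * (Real.sqrt r : ℂ) * conj (s * (Real.sqrt r : ℂ)) = r := by
  rw [Complex.mul_conj', norm_mul, hs, one_mul, Complex.norm_real, Real.norm_eq_abs,
    abs_of_nonneg (Real.sqrt_nonneg r), ← Complex.ofReal_pow, Real.sq_sqrt hr]

theorem stmt11 (T : H →L[ℂ] H) (hT : ‖T‖ ≤ 1) (α β s : ℂ)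
    (hα : ‖α‖ < 1) (hβ : ‖β‖ = 1) (hs : s ^ 2 = β) :
    1 - phiT T α β * adjoint (phiT T α β) =
      cT T α s * ((1 - T * adjoint T) * adjoint (cT T α s)) := by
  set A : H →L[ℂ] H := 1 - conj α • T
  have hA : IsUnit A := isUnit_one_sub_smul_of_norm_lt_one hT (by rwa [RCLike.norm_conj])
  have hβ_conj : β * conj β = 1 := by rw [Complex.mul_conj', hβ]; simp
  have hs_norm : ‖s‖ = 1 :=
    (pow_eq_one_iff_of_nonneg (norm_nonneg s) two_ne_zero).1 (by rw [← norm_pow, hs, hβ])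
  have hAφ : A * phiT T α β = β • (T - α • 1) := by
    rw [phiT, mul_smul_comm,
      mul_mul_ring_inverse_of_commute (commute_one_sub_smul_sub_smul_one T _ α) hA]
  have hAc : A * cT T α s = (s * (Real.sqrt (1 - ‖α‖ ^ 2) : ℂ)) • 1 := by
    rw [cT, mul_smul_comm, Ring.mul_inverse_cancel _ hA]
  simp only [← star_eq_adjoint]
  refine hA.eq_of_mul_mul_star_eq ?_
  calc A * (1 - phiT T α β * star (phiT T α β)) * star A
      = A * star A - (A * phiT T α β) * star (A * phiT T α β) := by noncomm_ring [star_mul]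
    _ = A * star A - (T - α • 1) * star (T - α • 1) := by
      rw [hAφ, star_smul, smul_mul_smul_comm, Complex.star_def, hβ_conj, one_smul]
    _ = ((1 - ‖α‖ ^ 2 : ℝ) : ℂ) • (1 - T * star T) := mobius_defect_identity T α
    _ = (A * cT T α s) * (1 - T * star T) * star (A * cT T α s) := by
      rw [hAc, star_smul, star_one, smul_one_mul, mul_smul_one, smul_smul, Complex.star_def,
        mul_comm (conj _),
        mul_conj_mul_sqrt hs_norm (sub_nonneg.2 (pow_le_one₀ (norm_nonneg α) hα.le))]
    _ = A * (cT T α s * ((1 - T * star T) * star (cT T α s))) * star A := by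
      noncomm_ring [star_mul]
end

section
/- Let φ₁, φ₂ ∈ Möb be given by φᵢ(z) = βᵢ(z−αᵢ)/(1−ᾱᵢz) with |αᵢ|<1, |βᵢ|=1, and let φ₁φ₂ have the form φ(z) = β(z−α)/(1−ᾱz). With s : 𝕋 → 𝕋 a fixed square-root function, the multiplier m₀(φ₁,φ₂) := c(φ₂^{-1}φ₁^{-1},z)/(c(φ₂^{-1},φ₁^{-1}(z))·c(φ₁^{-1},z)) equals s(β̄)/(s(β̄₁)·s(β̄₂)) · (1 + α₁ᾱ₂β̄₂)/|1 + α₁ᾱ₂β̄₂|. -/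
/-
With `aᵢ = -(αᵢ βᵢ)` and `a = -(α β)` the parameters of `φᵢ⁻¹` and `(φ₁ φ₂)⁻¹`, evaluating
the composition at `0` gives `a = φ₁(a₂)`. The factors `s(·)` split off, and what remains is
`√(1 - |a|²) (1 - ā₂ w)(1 - ā₁ z) / ((1 - ā z) √(1 - |a₁|²) √(1 - |a₂|²))` with `w = φ₁⁻¹ z`.
Two identities for `D = 1 - ā₂ α₁ = 1 + α₁ ᾱ₂ β̄₂` finish the computation: the chain rule for the
denominators, `(1 - ā₂ w)(1 - ā₁ z) = D (1 - ā z)`, and the invariance of `1 - |z|²`,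
`(1 - |φ₁(a₂)|²) |D|² = (1 - |α₁|²)(1 - |a₂|²)`.
-/

/-- The Möbius map `z ↦ β (z − α)/(1 − ᾱ z)` with parameters `α ∈ 𝔻`, `β ∈ 𝕋`. -/
noncomputable def mob (α β z : ℂ) : ℂ := β * (z - α) / (1 - (starRingEnd ℂ) α * z)

/-- `c(φ,z) = s(β) √(1−|α|²)/(1 − ᾱ z)` for the Möbius map with parameters `(α, β)`. -/
noncomputable def cfun (s : ℂ → ℂ) (α β z : ℂ) : ℂ :=
  s β * ((Real.sqrt (1 - ‖α‖ ^ 2) : ℝ) : ℂ) / (1 - (starRingEnd ℂ) α * z)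

open ComplexConjugate

lemma norm_one_sub_conj_mul_sq_sub_norm_sub_sq (a z : ℂ) :
    ‖1 - conj a * z‖ ^ 2 - ‖z - a‖ ^ 2 = (1 - ‖a‖ ^ 2) * (1 - ‖z‖ ^ 2) := by
  simp only [← Complex.normSq_eq_norm_sq]
  apply Complex.ofReal_injective
  push_cast
  simp only [← Complex.mul_conj, map_sub, map_mul, map_one, Complex.conj_conj]
  ring

lemma one_sub_conj_mul_ne_zero {a z : ℂ} (ha : ‖a‖ < 1) (hz : ‖z‖ < 1) :
    1 - conj a * z ≠ 0 := by
  intro h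
  have key := norm_one_sub_conj_mul_sq_sub_norm_sub_sq a z
  rw [h, norm_zero] at key
  have hpos : 0 < (1 - ‖a‖ ^ 2) * (1 - ‖z‖ ^ 2) := by
    apply mul_pos <;> nlinarith [norm_nonneg a, norm_nonneg z]
  nlinarith [sq_nonneg ‖z - a‖]

lemma norm_one_sub_conj_mul_comm (a z : ℂ) : ‖1 - conj a * z‖ = ‖1 - conj z * a‖ := by
  rw [← Complex.norm_conj]
  simp only [map_sub, map_one, map_mul, Complex.conj_conj, mul_comm]

lemma mob_zero (a b : ℂ) : mob a b 0 = -(a * b) := by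
  simp [mob, mul_comm]

lemma one_sub_norm_mob_sq_mul {a b z : ℂ} (hb : ‖b‖ = 1) (h : 1 - conj a * z ≠ 0) :
    (1 - ‖mob a b z‖ ^ 2) * ‖1 - conj a * z‖ ^ 2 = (1 - ‖a‖ ^ 2) * (1 - ‖z‖ ^ 2) := by
  have hpos : ‖1 - conj a * z‖ ^ 2 ≠ 0 := by positivity
  rw [mob, norm_div, norm_mul, hb, one_mul, div_pow, one_sub_mul, div_mul_cancel₀ _ hpos,
    norm_one_sub_conj_mul_sq_sub_norm_sub_sq]

lemma norm_mob_lt_one {a b z : ℂ} (ha : ‖a‖ < 1) (hb : ‖b‖ = 1) (hz : ‖z‖ < 1) :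
    ‖mob a b z‖ < 1 := by
  have h := one_sub_norm_mob_sq_mul hb (one_sub_conj_mul_ne_zero ha hz)
  have hrhs : 0 < (1 - ‖a‖ ^ 2) * (1 - ‖z‖ ^ 2) := by
    apply mul_pos <;> nlinarith [norm_nonneg a, norm_nonneg z]
  have : 0 < 1 - ‖mob a b z‖ ^ 2 := pos_of_mul_pos_left (h ▸ hrhs) (by positivity)
  nlinarith [norm_nonneg (mob a b z)]

lemma one_sub_conj_mul_mob_inv_mul {α₁ β₁ a₂ z : ℂ} (hβ₁ : ‖β₁‖ = 1)
    (hz : 1 - conj (-(α₁ * β₁)) * z ≠ 0) (hD : 1 - conj α₁ * a₂ ≠ 0) :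
    (1 - conj a₂ * mob (-(α₁ * β₁)) (conj β₁) z) * (1 - conj (-(α₁ * β₁)) * z) =
      (1 - conj a₂ * α₁) * (1 - conj (mob α₁ β₁ a₂) * z) := by
  have hβ₁' : conj β₁ * β₁ = 1 := by
    rw [mul_comm, Complex.mul_conj, Complex.normSq_eq_norm_sq, hβ₁]; norm_num
  have hD' : 1 - conj a₂ * α₁ ≠ 0 := by
    rw [← map_ne_zero (starRingEnd ℂ)]
    simpa [mul_comm] using hD
  have hconj : conj (mob α₁ β₁ a₂) = conj β₁ * (conj a₂ - conj α₁) / (1 - conj a₂ * α₁) := by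
    simp only [mob, map_div₀, map_mul, map_sub, map_one, Complex.conj_conj, mul_comm α₁]
  rw [hconj, mob, sub_mul, one_mul, mul_assoc, div_mul_cancel₀ _ hz]
  simp only [map_neg, map_mul]
  linear_combination -(conj a₂ * α₁) * hβ₁' +
    conj β₁ * (conj a₂ - conj α₁) * z * mul_inv_cancel₀ hD'

lemma cfun_div_cfun_mul_cfun (s : ℂ → ℂ) (a b a₁ b₁ a₂ b₂ z w : ℂ) :
    cfun s a b z / (cfun s a₂ b₂ w * cfun s a₁ b₁ z) =
      s b / (s b₁ * s b₂) * (cfun 1 a b z / (cfun 1 a₂ b₂ w * cfun 1 a₁ b₁ z)) := by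
  simp only [cfun, Pi.one_apply]
  ring

lemma cfun_one_div_cfun_one_mul_cfun_one {a b a₁ b₁ a₂ b₂ z w D : ℂ}
    (ha₁ : ‖a₁‖ < 1) (ha₂ : ‖a₂‖ < 1) (hz : 1 - conj a₁ * z ≠ 0) (hw : 1 - conj a₂ * w ≠ 0)
    (hnorm : (1 - ‖a‖ ^ 2) * ‖D‖ ^ 2 = (1 - ‖a₁‖ ^ 2) * (1 - ‖a₂‖ ^ 2))
    (hden : (1 - conj a₂ * w) * (1 - conj a₁ * z) = D * (1 - conj a * z)) :
    cfun 1 a b z / (cfun 1 a₂ b₂ w * cfun 1 a₁ b₁ z) = D / ‖D‖ := by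
  have h₁ : 0 < 1 - ‖a₁‖ ^ 2 := by nlinarith [norm_nonneg a₁]
  have h₂ : 0 < 1 - ‖a₂‖ ^ 2 := by nlinarith [norm_nonneg a₂]
  have hD : D ≠ 0 := by
    rintro rfl
    rw [norm_zero, zero_pow two_ne_zero, mul_zero] at hnorm
    exact (mul_pos h₁ h₂).ne hnorm
  have hsqrt : (√(1 - ‖a‖ ^ 2) : ℂ) * ‖D‖ = √(1 - ‖a₁‖ ^ 2) * √(1 - ‖a₂‖ ^ 2) := by
    norm_cast
    rw [← Real.sqrt_mul h₁.le, ← hnorm, Real.sqrt_mul' _ (sq_nonneg _),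
      Real.sqrt_sq (norm_nonneg _)]
  have hr₁ : (√(1 - ‖a₁‖ ^ 2) : ℂ) ≠ 0 := by exact_mod_cast (Real.sqrt_pos.2 h₁).ne'
  have hr₂ : (√(1 - ‖a₂‖ ^ 2) : ℂ) ≠ 0 := by exact_mod_cast (Real.sqrt_pos.2 h₂).ne'
  have hR : 1 - conj a * z ≠ 0 := right_ne_zero_of_mul (hden ▸ mul_ne_zero hw hz)
  simp only [cfun, Pi.one_apply, one_mul]
  rw [div_mul_div_comm, div_div_div_eq, div_eq_div_iff (by simp [*]) (by simpa using hD)]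
  linear_combination (√(1 - ‖a‖ ^ 2) * ‖D‖ : ℂ) * hden + (D * (1 - conj a * z)) * hsqrt

theorem stmt14_general (s : ℂ → ℂ)
    (α₁ β₁ α₂ β₂ α β : ℂ)
    (hα₁ : ‖α₁‖ < 1) (hβ₁ : ‖β₁‖ = 1)
    (hα₂ : ‖α₂‖ < 1) (hβ₂ : ‖β₂‖ = 1)
    (hcomp : ∀ z : ℂ, ‖z‖ < 1 → mob α β z = mob α₁ β₁ (mob α₂ β₂ z))
    (z : ℂ) (hz : ‖z‖ < 1) :
    cfun s (-(α * β)) ((starRingEnd ℂ) β) z /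
        (cfun s (-(α₂ * β₂)) ((starRingEnd ℂ) β₂)
            (mob (-(α₁ * β₁)) ((starRingEnd ℂ) β₁) z) *
          cfun s (-(α₁ * β₁)) ((starRingEnd ℂ) β₁) z) =
      s ((starRingEnd ℂ) β) / (s ((starRingEnd ℂ) β₁) * s ((starRingEnd ℂ) β₂)) *
        ((1 + α₁ * (starRingEnd ℂ) α₂ * (starRingEnd ℂ) β₂) /
          ((‖1 + α₁ * (starRingEnd ℂ) α₂ * (starRingEnd ℂ) β₂‖ : ℝ) : ℂ)) := by
  have hn₁ : ‖-(α₁ * β₁)‖ = ‖α₁‖ := by simp [hβ₁]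
  have ha₁ : ‖-(α₁ * β₁)‖ < 1 := hn₁ ▸ hα₁
  have ha₂ : ‖-(α₂ * β₂)‖ < 1 := by simpa [hβ₂] using hα₂
  have ha : -(α * β) = mob α₁ β₁ (-(α₂ * β₂)) := by
    simpa only [mob_zero] using hcomp 0 (by simp)
  have hD_eq : 1 + α₁ * conj α₂ * conj β₂ = 1 - conj (-(α₂ * β₂)) * α₁ := by
    simp only [map_neg, map_mul]; ring
  have hz₁ := one_sub_conj_mul_ne_zero ha₁ hz
  have hD := one_sub_conj_mul_ne_zero hα₁ ha₂
  rw [cfun_div_cfun_mul_cfun, hD_eq]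
  congr 1
  refine cfun_one_div_cfun_one_mul_cfun_one ha₁ ha₂ hz₁
    (one_sub_conj_mul_ne_zero ha₂ (norm_mob_lt_one ha₁ (by rwa [Complex.norm_conj]) hz)) ?_ ?_
  · rw [ha, norm_one_sub_conj_mul_comm, one_sub_norm_mob_sq_mul hβ₁ hD, hn₁]
  · rw [ha]
    exact one_sub_conj_mul_mob_inv_mul hβ₁ hz₁ hD

/-- The inverse of the Möbius map with parameters `(α, β)` has parameters
`(−αβ, β̄)`.  If `(α,β)` parametrizes `φ₁ φ₂`, then
`m₀(φ₁,φ₂) = c((φ₁φ₂)⁻¹, z)/(c(φ₂⁻¹, φ₁⁻¹ z) c(φ₁⁻¹, z))`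
equals `s(β̄)/(s(β̄₁) s(β̄₂)) · (1 + α₁ ᾱ₂ β̄₂)/|1 + α₁ ᾱ₂ β̄₂|`. -/
theorem stmt14 (s : ℂ → ℂ) (hs : ∀ ζ : ℂ, ‖ζ‖ = 1 → (s ζ) ^ 2 = ζ)
    (hs1 : s 1 = 1)
    (α₁ β₁ α₂ β₂ α β : ℂ)
    (hα₁ : ‖α₁‖ < 1) (hβ₁ : ‖β₁‖ = 1)
    (hα₂ : ‖α₂‖ < 1) (hβ₂ : ‖β₂‖ = 1)
    (hα : ‖α‖ < 1) (hβ : ‖β‖ = 1)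
    (hcomp : ∀ z : ℂ, ‖z‖ < 1 → mob α β z = mob α₁ β₁ (mob α₂ β₂ z))
    (z : ℂ) (hz : ‖z‖ < 1) :
    cfun s (-(α * β)) ((starRingEnd ℂ) β) z /
        (cfun s (-(α₂ * β₂)) ((starRingEnd ℂ) β₂)
            (mob (-(α₁ * β₁)) ((starRingEnd ℂ) β₁) z) *
          cfun s (-(α₁ * β₁)) ((starRingEnd ℂ) β₁) z) =
      s ((starRingEnd ℂ) β) / (s ((starRingEnd ℂ) β₁) * s ((starRingEnd ℂ) β₂)) *
        ((1 + α₁ * (starRingEnd ℂ) α₂ * (starRingEnd ℂ) β₂) /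
          ((‖1 + α₁ * (starRingEnd ℂ) α₂ * (starRingEnd ℂ) β₂‖ : ℝ) : ℂ)) :=
  stmt14_general s α₁ β₁ α₂ β₂ α β hα₁ hβ₁ hα₂ hβ₂ hcomp z hz
end

section
/- Let H be a reproducing kernel Hilbert space of ℂⁿ-valued functions on a set Ω that is the orthogonal direct sum of nontrivial subspaces H₀,…,H_{m−1} with reproducing kernels K₀,…,K_{m−1}. Let a₀,…,a_{m−1} be real numbers. Then ∑ⱼ aⱼKⱼ is a non-negative definite kernel if and only if aⱼ ≥ 0 for all j. -/
/-!
Writing `Kⱼ(·, w) ξ` for the representer of `f ↦ ⟨f(w), ξ⟩` on `Hⱼ`, the form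
`∑_{p,q} ⟨(∑ⱼ aⱼ Kⱼ)(w_q, w_p) ξ_p, ξ_q⟩` equals `∑ⱼ aⱼ ‖∑_p Kⱼ(·, w_p) ξ_p‖²`, which settles
one direction. Conversely, the kernel functions `K(·, w) ξ = ∑ⱼ Kⱼ(·, w) ξ` of `H` span a dense
subspace, because a vector orthogonal to all of them vanishes pointwise. Approximate a nonzero
`f ∈ H_{j₀}` by `h = ∑_p K(·, w_p) ξ_p`: by Pythagoras the components `∑_p Kⱼ(·, w_p) ξ_p` of `h`
are close to those of `f`, so the form is close to `a_{j₀} ‖f‖²`, negative if `a_{j₀} < 0`.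
-/

open ComplexConjugate ComplexOrder Function
open scoped InnerProductSpace

section

variable {E Ω ι : Type*} [NormedAddCommGroup E] [InnerProductSpace ℂ E] [Fintype ι]

/-- `g w ξ` plays the role of `K(·, w) ξ`, where `K` is the reproducing kernel of `H`. -/
def IsEvalRepresenter (J : E →ₗ[ℂ] Ω → ι → ℂ) (H : Submodule ℂ E)
    (g : Ω → (ι → ℂ) → E) : Prop :=
  ∀ w ξ, g w ξ ∈ H ∧ ∀ f ∈ H, ⟪g w ξ, f⟫_ℂ = ∑ i, J f w i * conj (ξ i)

def kernelForm (L : Ω → Ω → Matrix ι ι ℂ) {N : ℕ} (w : Fin N → Ω) (ξ : Fin N → ι → ℂ) : ℂ :=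
  ∑ q, ∑ p, ∑ i, conj (ξ q i) * (L (w q) (w p)).mulVec (ξ p) i

theorem kernelForm_sum_smul {κ : Type*} [Fintype κ] (c : κ → ℂ)
    (L : κ → Ω → Ω → Matrix ι ι ℂ) {N : ℕ} (w : Fin N → Ω) (ξ : Fin N → ι → ℂ) :
    kernelForm (fun x y => ∑ j, c j • L j x y) w ξ = ∑ j, c j * kernelForm (L j) w ξ := by
  simp only [kernelForm, Matrix.sum_mulVec, Matrix.smul_mulVec, Finset.sum_apply,
    Pi.smul_apply, smul_eq_mul, Finset.mul_sum]
  conv_rhs =>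
    rw [Finset.sum_comm]; enter [2, q]; rw [Finset.sum_comm]; enter [2, p]; rw [Finset.sum_comm]
  simp only [mul_left_comm]

namespace IsEvalRepresenter

variable {J : E →ₗ[ℂ] Ω → ι → ℂ} {H : Submodule ℂ E} {g : Ω → (ι → ℂ) → E}

theorem mem (hg : IsEvalRepresenter J H g) (w : Ω) (ξ : ι → ℂ) : g w ξ ∈ H :=
  (hg w ξ).1

theorem inner_left (hg : IsEvalRepresenter J H g) {f : E} (hf : f ∈ H) (w : Ω) (ξ : ι → ℂ) :
    ⟪g w ξ, f⟫_ℂ = ∑ i, J f w i * conj (ξ i) :=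
  (hg w ξ).2 f hf

theorem map_smul (hg : IsEvalRepresenter J H g) (w : Ω) (c : ℂ) (ξ : ι → ℂ) :
    g w (c • ξ) = c • g w ξ := by
  have hmem : g w (c • ξ) - c • g w ξ ∈ H := H.sub_mem (hg.mem _ _) (H.smul_mem c (hg.mem _ _))
  rw [← sub_eq_zero, ← inner_self_eq_zero (𝕜 := ℂ)]
  nth_rw 1 [inner_sub_left, inner_smul_left, hg.inner_left hmem, hg.inner_left hmem,
    Finset.mul_sum, ← Finset.sum_sub_distrib]
  simp [mul_left_comm]

theorem kernelForm_eq {K : Ω → Ω → Matrix ι ι ℂ} (hg : IsEvalRepresenter J H g)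
    (hK : ∀ w ξ x, J (g w ξ) x = (K x w).mulVec ξ) {N : ℕ} (w : Fin N → Ω)
    (ξ : Fin N → ι → ℂ) :
    kernelForm K w ξ = ((‖∑ p, g (w p) (ξ p)‖ ^ 2 : ℝ) : ℂ) := by
  calc kernelForm K w ξ = ⟪∑ p, g (w p) (ξ p), ∑ p, g (w p) (ξ p)⟫_ℂ := by
        rw [sum_inner]
        simp only [inner_sum, hg.inner_left (hg.mem _ _), hK, kernelForm, mul_comm]
    _ = _ := by rw [inner_self_eq_norm_sq_to_K]; simp

theorem sum_of_orthogonalFamily {κ : Type*} [Fintype κ] {Hs : κ → Submodule ℂ E}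
    (horth : OrthogonalFamily ℂ (fun j => Hs j) fun j => (Hs j).subtypeₗᵢ)
    (hspan : ⨆ j, Hs j = ⊤) {g : κ → Ω → (ι → ℂ) → E}
    (hg : ∀ j, IsEvalRepresenter J (Hs j) (g j)) :
    IsEvalRepresenter J ⊤ fun w ξ => ∑ j, g j w ξ := by
  classical
  refine fun w ξ => ⟨trivial, fun u _ => ?_⟩
  have hu : u ∈ ⨆ j, Hs j := hspan ▸ trivial
  induction hu using Submodule.iSup_induction' with
  | mem j u hu =>
    rw [sum_inner, Finset.sum_eq_single j fun j' _ hj' =>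
      (horth.isOrtho hj').inner_eq ((hg j').mem w ξ) hu, (hg j).inner_left hu]
    simp
  | zero => simp
  | add u v _ _ hu hv => simp [hu, hv, add_mul, Finset.sum_add_distrib]

theorem dense_span [CompleteSpace E] (hJ : Injective J) {k : Ω → (ι → ℂ) → E}
    (hk : IsEvalRepresenter J ⊤ k) :
    Dense (Submodule.span ℂ (Set.range (uncurry k)) : Set E) := by
  classical
  rw [Submodule.dense_iff_topologicalClosure_eq_top, Submodule.topologicalClosure_eq_top_iff,
    Submodule.eq_bot_iff]
  intro u hu
  refine hJ (funext fun w => funext fun i => ?_)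
  have h := Submodule.inner_right_of_mem_orthogonal
    (Submodule.subset_span (Set.mem_range_self (w, Pi.single i 1))) hu
  rw [map_zero]
  simpa [hk.inner_left trivial, Pi.single_apply] using h

theorem exists_eq_sum_of_mem_span {k : Ω → (ι → ℂ) → E} (hk : IsEvalRepresenter J H k) {h : E}
    (hh : h ∈ Submodule.span ℂ (Set.range (uncurry k))) :
    ∃ (N : ℕ) (w : Fin N → Ω) (ξ : Fin N → ι → ℂ), h = ∑ p, k (w p) (ξ p) := by
  obtain ⟨N, c, y, rfl⟩ := Submodule.mem_span_set'.mp hh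
  choose pq hpq using fun p => (y p).2
  refine ⟨N, fun p => (pq p).1, fun p => c p • (pq p).2, Finset.sum_congr rfl fun p _ => ?_⟩
  rw [hk.map_smul, ← hpq p]
  rfl

end IsEvalRepresenter

theorem OrthogonalFamily.norm_le_norm_sum {κ : Type*} [Fintype κ] {Hs : κ → Submodule ℂ E}
    (horth : OrthogonalFamily ℂ (fun j => Hs j) fun j => (Hs j).subtypeₗᵢ) {x : κ → E}
    (hx : ∀ j, x j ∈ Hs j) (j : κ) : ‖x j‖ ≤ ‖∑ j, x j‖ := by
  have h := horth.norm_sum (fun j => ⟨x j, hx j⟩) Finset.univ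
  simp only [Submodule.coe_subtypeₗᵢ, Submodule.coe_subtype, Submodule.coe_norm] at h
  refine pow_le_pow_iff_left₀ (norm_nonneg _) (norm_nonneg _) two_ne_zero |>.mp ?_
  rw [h]
  exact Finset.single_le_sum (f := fun j => ‖x j‖ ^ 2) (fun _ _ => sq_nonneg _) (Finset.mem_univ j)

theorem exists_sum_mul_norm_sq_neg [CompleteSpace E] {κ : Type*} [Fintype κ]
    {J : E →ₗ[ℂ] Ω → ι → ℂ} (hJ : Injective J) {Hs : κ → Submodule ℂ E}
    (horth : OrthogonalFamily ℂ (fun j => Hs j) fun j => (Hs j).subtypeₗᵢ)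
    (hspan : ⨆ j, Hs j = ⊤) {g : κ → Ω → (ι → ℂ) → E}
    (hg : ∀ j, IsEvalRepresenter J (Hs j) (g j)) {a : κ → ℝ} {j₀ : κ} (ha : a j₀ < 0)
    (hne : Hs j₀ ≠ ⊥) :
    ∃ (N : ℕ) (w : Fin N → Ω) (ξ : Fin N → ι → ℂ),
      ∑ j, a j * ‖∑ p, g j (w p) (ξ p)‖ ^ 2 < 0 := by
  classical
  obtain ⟨f, hf, hf0⟩ := (Submodule.ne_bot_iff _).mp hne
  set y : κ → E := Pi.single j₀ f
  have hy : ∀ j, y j ∈ Hs j := by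
    intro j
    rcases eq_or_ne j j₀ with rfl | hj
    · simpa [y] using hf
    · simp [y, hj]
  set Φ : (κ → E) → ℝ := fun x => ∑ j, a j * ‖x j‖ ^ 2
  have hΦ : Φ y < 0 := by
    rw [show Φ y = a j₀ * ‖f‖ ^ 2 from
      (Fintype.sum_eq_single j₀ fun j hj => by simp [y, hj]).trans (by simp [y])]
    exact mul_neg_of_neg_of_pos ha (pow_pos (norm_pos_iff.2 hf0) 2)
  obtain ⟨ε, hε, hball⟩ := Metric.mem_nhds_iff.mp
    ((isOpen_lt (by fun_prop : Continuous Φ) continuous_const).mem_nhds hΦ)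
  have hk := IsEvalRepresenter.sum_of_orthogonalFamily horth hspan hg
  obtain ⟨h, hh, hdist⟩ := (hk.dense_span hJ).exists_dist_lt f hε
  obtain ⟨N, w, ξ, rfl⟩ := hk.exists_eq_sum_of_mem_span hh
  refine ⟨N, w, ξ, hball ?_⟩
  have hmem : ∀ j, ∑ p, g j (w p) (ξ p) - y j ∈ Hs j := fun j =>
    (Hs j).sub_mem (Submodule.sum_mem _ fun p _ => (hg j).mem _ _) (hy j)
  rw [Metric.mem_ball, dist_pi_lt_iff hε]
  intro j
  calc dist (∑ p, g j (w p) (ξ p)) (y j)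
      ≤ ‖∑ j, (∑ p, g j (w p) (ξ p) - y j)‖ :=
        (dist_eq_norm _ _).trans_le (horth.norm_le_norm_sum hmem j)
    _ < ε := by
        rwa [Finset.sum_sub_distrib, Fintype.sum_pi_single', Finset.sum_comm, ← dist_eq_norm,
          dist_comm]

end

theorem stmt16_general {E Ω : Type*} [NormedAddCommGroup E] [InnerProductSpace ℂ E]
    [CompleteSpace E] (n m : ℕ)
    (J : E →ₗ[ℂ] (Ω → Fin n → ℂ)) (hJ : Function.Injective J)
    (Hs : Fin m → Submodule ℂ E)
    (horth : ∀ j j' : Fin m, j ≠ j' → ∀ f ∈ Hs j, ∀ g ∈ Hs j',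
      (inner ℂ f g : ℂ) = 0)
    (hspan : (⨆ j, Hs j) = ⊤)
    (hnontriv : ∀ j, Hs j ≠ ⊥)
    (K : Fin m → Ω → Ω → Matrix (Fin n) (Fin n) ℂ)
    (hrep : ∀ (j : Fin m) (w : Ω) (ξ : Fin n → ℂ), ∃ g : E, g ∈ Hs j ∧
      (∀ x : Ω, J g x = (K j x w).mulVec ξ) ∧
      ∀ f ∈ Hs j, (inner ℂ g f : ℂ) = ∑ i : Fin n, J f w i * (starRingEnd ℂ) (ξ i))
    (a : Fin m → ℝ) :
    (∀ (N : ℕ) (w : Fin N → Ω) (ξ : Fin N → Fin n → ℂ),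
        0 ≤ ∑ q : Fin N, ∑ p : Fin N, ∑ i : Fin n,
            (starRingEnd ℂ) (ξ q i) *
              ((∑ j : Fin m, (a j : ℂ) • K j (w q) (w p)).mulVec (ξ p) i)) ↔
      ∀ j, 0 ≤ a j := by
  choose g hgmem hgK hginner using hrep
  have hg : ∀ j, IsEvalRepresenter J (Hs j) (g j) := fun j w ξ => ⟨hgmem j w ξ, hginner j w ξ⟩
  have hform : ∀ (N : ℕ) (w : Fin N → Ω) (ξ : Fin N → Fin n → ℂ),
      kernelForm (fun x y => ∑ j, (a j : ℂ) • K j x y) w ξ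
        = ((∑ j, a j * ‖∑ p, g j (w p) (ξ p)‖ ^ 2 : ℝ) : ℂ) := by
    intro N w ξ
    rw [kernelForm_sum_smul, Complex.ofReal_sum]
    refine Finset.sum_congr rfl fun j _ => ?_
    rw [(hg j).kernelForm_eq (hgK j), Complex.ofReal_mul]
  change (∀ (N : ℕ) (w : Fin N → Ω) (ξ : Fin N → Fin n → ℂ),
    0 ≤ kernelForm (fun x y => ∑ j, (a j : ℂ) • K j x y) w ξ) ↔ _
  simp_rw [hform, Complex.zero_le_real]
  constructor
  · intro hpos
    by_contra! ⟨j₀, hj₀⟩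
    have horth' : OrthogonalFamily ℂ (fun j => Hs j) fun j => (Hs j).subtypeₗᵢ :=
      fun j j' hjj' f f' => horth j j' hjj' f f.2 f' f'.2
    obtain ⟨N, w, ξ, hneg⟩ := exists_sum_mul_norm_sq_neg hJ horth' hspan hg hj₀ (hnontriv j₀)
    exact (hpos N w ξ).not_gt hneg
  · intro ha N w ξ
    exact Finset.sum_nonneg fun j _ => mul_nonneg (ha j) (sq_nonneg _)

/-- Lemma of Faraut–Korányi: a functional Hilbert space `H` (realized via an injective
linear map `J` into `ℂⁿ`-valued functions on `Ω`) is the orthogonal direct sum of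
nontrivial subspaces `H₀, …, H_{m−1}` with reproducing kernels `K₀, …, K_{m−1}`.
For real numbers `a₀, …, a_{m−1}`, the kernel `∑ⱼ aⱼ Kⱼ` is non-negative definite
iff all `aⱼ ≥ 0`. -/
theorem stmt16 {E Ω : Type*} [NormedAddCommGroup E] [InnerProductSpace ℂ E]
    [CompleteSpace E] (n m : ℕ) (hm : 0 < m)
    (J : E →ₗ[ℂ] (Ω → Fin n → ℂ)) (hJ : Function.Injective J)
    (Hs : Fin m → Submodule ℂ E)
    (horth : ∀ j j' : Fin m, j ≠ j' → ∀ f ∈ Hs j, ∀ g ∈ Hs j',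
      (inner ℂ f g : ℂ) = 0)
    (hspan : (⨆ j, Hs j) = ⊤)
    (hnontriv : ∀ j, Hs j ≠ ⊥)
    (K : Fin m → Ω → Ω → Matrix (Fin n) (Fin n) ℂ)
    (hrep : ∀ (j : Fin m) (w : Ω) (ξ : Fin n → ℂ), ∃ g : E, g ∈ Hs j ∧
      (∀ x : Ω, J g x = (K j x w).mulVec ξ) ∧
      ∀ f ∈ Hs j, (inner ℂ g f : ℂ) = ∑ i : Fin n, J f w i * (starRingEnd ℂ) (ξ i))
    (a : Fin m → ℝ) :
    (∀ (N : ℕ) (w : Fin N → Ω) (ξ : Fin N → Fin n → ℂ),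
        0 ≤ ∑ q : Fin N, ∑ p : Fin N, ∑ i : Fin n,
            (starRingEnd ℂ) (ξ q i) *
              ((∑ j : Fin m, (a j : ℂ) • K j (w q) (w p)).mulVec (ξ p) i)) ↔
      ∀ j, 0 ≤ a j :=
  stmt16_general n m J hJ Hs horth hspan hnontriv K hrep a
end

section
/- Let λ > 1 be real. For each integer p ≥ 0 and 0 ≤ j ≤ p, define the homogeneous polynomial h_{j,p}(z,w) = ∑_{i=j}^{p} C(i,j)·C(p−i+λ−1, p−i)·z^i w^{p−i} (where C(p−i+λ−1,p−i) = (λ)_{p−i}/(p−i)! is a generalized binomial coefficient). For 0 ≤ k ≤ p+1, the set {h_{j,p} : 0 ≤ j < k} is linearly independent, and its span equals the space of homogeneous polynomials of degree p in (z,w) that are orthogonal (in the weighted inner product where ⟨z^i w^{p−i}, z^i w^{p−i}⟩ = 1/C(p−i+λ−1,p−i)) to all homogeneous degree-p polynomials ∑ aᵢ z^i w^{p−i} whose coefficient vector a lies in the kernel of the adjoint of the (p+1)×k matrix (C(i,j))_{0≤i≤p, 0≤j<k}. -/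
/-- The generalized binomial coefficient `C(p−i+λ−1, p−i) = (λ)_{p−i}/(p−i)!`. -/
noncomputable def binc (lam : ℝ) (p i : ℕ) : ℝ :=
  poch lam (p - i) / (Nat.factorial (p - i) : ℝ)

/-- The coefficient vector of the homogeneous polynomial
`h_{j,p}(z,w) = ∑_{i=j}^p C(i,j) C(p−i+λ−1,p−i) zⁱ w^{p−i}`
in the monomial basis `zⁱ w^{p−i}`, `0 ≤ i ≤ p`.  (Note `C(i,j) = 0` for `i < j`.) -/
noncomputable def hvec (lam : ℝ) (p k : ℕ) (j : Fin k) : Fin (p + 1) → ℂ :=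
  fun i => ((i : ℕ).choose (j : ℕ) : ℂ) * ((binc lam p (i : ℕ) : ℝ) : ℂ)

/-- The `(p+1) × k` matrix `D = (C(i,j))`. -/
def Dmat (p k : ℕ) : Matrix (Fin (p + 1)) (Fin k) ℂ :=
  Matrix.of fun i j => ((i : ℕ).choose (j : ℕ) : ℂ)

namespace Matrix

theorem mem_span_range_col_iff {𝕜 m n : Type*} [RCLike 𝕜] [Fintype m] [Fintype n]
    (A : Matrix m n 𝕜) (b : m → 𝕜) :
    b ∈ Submodule.span 𝕜 (Set.range A.col) ↔ ∀ a, Aᴴ *ᵥ a = 0 → star a ⬝ᵥ b = 0 := by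
  classical
  have range_eq : A.toEuclideanLin.range = (Aᴴ.toEuclideanLin.ker)ᗮ := by
    rw [LinearMap.orthogonal_ker, ← toEuclideanLin_conjTranspose_eq_adjoint,
      conjTranspose_conjTranspose]
  have mem_range :
      b ∈ LinearMap.range A.mulVecLin ↔ WithLp.toLp 2 b ∈ A.toEuclideanLin.range := by
    simp only [LinearMap.mem_range, mulVecBilin_apply, toLpLin_apply, WithLp.toLp.injEq]
    exact ⟨fun ⟨y, h⟩ => ⟨WithLp.toLp 2 y, h⟩, fun ⟨y, h⟩ => ⟨y.ofLp, h⟩⟩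
  rw [← range_mulVecLin, mem_range, range_eq, Submodule.mem_orthogonal]
  simp only [LinearMap.mem_ker, toLpLin_apply, WithLp.toLp_eq_zero,
    EuclideanSpace.inner_eq_star_dotProduct, dotProduct_comm b]
  exact ⟨fun h a => h (WithLp.toLp 2 a), fun h u => h u.ofLp⟩

end Matrix

section MulRightUnit

variable {K A ι : Type*} [CommRing K] [Ring A] [Algebra K A] {v : ι → A}

theorem LinearIndependent.mul_right_unit (hv : LinearIndependent K v) (u : Aˣ) :
    LinearIndependent K fun j => v j * u :=
  hv.map' (u.mulRightLinearEquiv K).toLinearMap (LinearEquiv.ker _)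

theorem mem_span_range_mul_right_unit_iff (u : Aˣ) (b : A) :
    b ∈ Submodule.span K (Set.range fun j => v j * u) ↔
      b * ↑u⁻¹ ∈ Submodule.span K (Set.range v) := by
  have : (Set.range fun j => v j * u) = u.mulRightLinearEquiv K '' Set.range v :=
    Set.range_comp (u.mulRightLinearEquiv K) v
  rw [this, Submodule.span_image_linearEquiv, Submodule.mem_map_equiv]
  rfl

end MulRightUnit

theorem linearIndependent_choose {R : Type*} [CommRing R] {k n : ℕ} (hk : k ≤ n) :
    LinearIndependent R fun (j : Fin k) (i : Fin n) => ((i : ℕ).choose j : R) := by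
  let P : Matrix (Fin k) (Fin k) R := Matrix.of fun i j => ((i : ℕ).choose j : R)
  have hP : P.det = 1 := by
    rw [Matrix.det_of_isLowerTriangular P fun i j hij => ?_]
    · simp [P]
    · simp [P, Nat.choose_eq_zero_of_lt (show (i : ℕ) < j from hij)]
  apply LinearIndependent.of_comp (LinearMap.funLeft R R (Fin.castLE hk))
  convert P.linearIndependent_cols_of_isUnit (P.isUnit_iff_isUnit_det.mpr (hP ▸ isUnit_one))
  rfl

theorem binc_pos {lam : ℝ} (hlam : 0 < lam) (p i : ℕ) : 0 < binc lam p i :=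
  div_pos (Finset.prod_pos fun _ _ => by positivity) (by positivity)

/-- For `0 ≤ k ≤ p+1`, the vectors `h_{j,p}`, `0 ≤ j < k`, are linearly independent,
and their span equals the set of (coefficient vectors of) homogeneous degree-`p`
polynomials orthogonal, in the weighted inner product with
`‖zⁱ w^{p−i}‖² = 1/C(p−i+λ−1,p−i)`, to all polynomials whose coefficient vector lies
in the kernel of `D*`. -/
theorem stmt17 (lam : ℝ) (hlam : 1 < lam) (p k : ℕ) (hk : k ≤ p + 1) :
    LinearIndependent ℂ (hvec lam p k) ∧
      (Submodule.span ℂ (Set.range (hvec lam p k)) : Set (Fin (p + 1) → ℂ)) =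
        {b | ∀ a : Fin (p + 1) → ℂ,
          (Dmat p k).conjTranspose.mulVec a = 0 →
            ∑ i : Fin (p + 1),
              (starRingEnd ℂ) (a i) * b i / ((binc lam p (i : ℕ) : ℝ) : ℂ) = 0} := by
  have hw : IsUnit fun i : Fin (p + 1) => ((binc lam p i : ℝ) : ℂ) :=
    Pi.isUnit_iff.mpr fun i =>
      (Complex.ofReal_ne_zero.mpr (binc_pos (zero_lt_one.trans hlam) p i).ne').isUnit
  have hvec_eq : hvec lam p k = fun j => (Dmat p k).col j * hw.unit := rfl
  rw [hvec_eq]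
  have hcol : LinearIndependent ℂ (Dmat p k).col := linearIndependent_choose hk
  refine ⟨hcol.mul_right_unit _, ?_⟩
  ext b
  rw [SetLike.mem_coe, mem_span_range_mul_right_unit_iff,
    Matrix.mem_span_range_col_iff]
  simp only [Set.mem_ofPred_eq, dotProduct, Pi.mul_apply, Units.val_inv_eq_inv_val,
    IsUnit.unit_spec, Pi.inv_apply, Pi.star_apply, div_eq_mul_inv, mul_assoc, Complex.star_def]
end
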